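/- For every i with 0 ≤ i ≤ m and every n ∈ ℕ, |s_i^{E(m−i, n)}|_{G_m} ≤ 2^{m−i}·(n + m − i). -/
import Mathlib


/-- Iterated exponential: `E 0 n = n`, `E (m+1) n = 2 ^ E m n`. -/
def E : ℕ → ℕ → ℕ
  | 0, n => n
  | m + 1, n => 2 ^ E m n

/-- `Preceq f g` iff there is `C > 0` with `f n ≤ C * g (C*n + C) + C*n + C` for all `n`. -/
def Preceq (f g : ℕ → ℕ) : Prop :=
  ∃ C : ℕ, 0 < C ∧ ∀ n : ℕ, f n ≤ C * g (C * n + C) + C * n + C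

/-- Defining relations of the `m`-th iterated Baumslag–Solitar group:
`s_{i+1} s_i s_{i+1}⁻¹ = s_i²` for `i = 0, …, m-1`. -/
def bsRels (m : ℕ) : Set (FreeGroup (Fin (m + 1))) :=
  Set.range (fun i : Fin m =>
    FreeGroup.of i.succ * FreeGroup.of i.castSucc * (FreeGroup.of i.succ)⁻¹ *
      (FreeGroup.of i.castSucc ^ 2)⁻¹)

/-- The `m`-th iterated Baumslag–Solitar group. -/
abbrev IterBS (m : ℕ) := PresentedGroup (bsRels m)

/-- The generator `s_i` of `IterBS m`. -/
def sg {m : ℕ} (i : Fin (m + 1)) : IterBS m := PresentedGroup.of i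

/-- The element of `IterBS m` represented by a word on the generators and their inverses. -/
def evalWord {m : ℕ} (w : List (Fin (m + 1) × Bool)) : IterBS m :=
  (w.map (fun p => if p.2 then sg p.1 else (sg p.1)⁻¹)).prod

/-- Word length of `g ∈ IterBS m` with respect to the generators `s_0, …, s_m`. -/
noncomputable def wl {m : ℕ} (g : IterBS m) : ℕ :=
  sInf { n | ∃ w : List (Fin (m + 1) × Bool), w.length = n ∧ evalWord w = g }

/-- The minimal word length of a conjugator taking `u` to `v`. -/
noncomputable def cLen {m : ℕ} (u v : IterBS m) : ℕ :=
  sInf { n | ∃ γ : IterBS m, γ * u * γ⁻¹ = v ∧ wl γ = n }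

/-- The conjugator length function of `IterBS m`. -/
noncomputable def CLGm (m : ℕ) (n : ℕ) : ℕ :=
  sSup { c | ∃ u v : List (Fin (m + 1) × Bool),
    u.length + v.length ≤ n ∧
    (∃ γ : IterBS m, γ * evalWord u * γ⁻¹ = evalWord v) ∧
    c = cLen (evalWord u) (evalWord v) }

lemma sg_rel {m : ℕ} (i : ℕ) (h : i < m) :
    sg (⟨i + 1, by omega⟩ : Fin (m + 1)) * sg ⟨i, by omega⟩ *
      (sg (⟨i + 1, by omega⟩ : Fin (m + 1)))⁻¹ = sg ⟨i, by omega⟩ ^ 2 := by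
  set j : Fin m := ⟨i, h⟩
  have hr : (FreeGroup.of j.succ * FreeGroup.of j.castSucc * (FreeGroup.of j.succ)⁻¹ *
      (FreeGroup.of j.castSucc ^ 2)⁻¹) ∈ bsRels m := ⟨j, rfl⟩
  have h1 : (PresentedGroup.mk (bsRels m))
      (FreeGroup.of j.succ * FreeGroup.of j.castSucc * (FreeGroup.of j.succ)⁻¹ *
      (FreeGroup.of j.castSucc ^ 2)⁻¹) = 1 := by
    apply (QuotientGroup.eq_one_iff _).mpr
    exact Subgroup.subset_normalClosure hr
  rw [map_mul, map_mul, map_mul, map_inv, map_inv, map_pow] at h1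
  have hs : sg (⟨i + 1, by omega⟩ : Fin (m + 1)) = PresentedGroup.mk (bsRels m) (FreeGroup.of j.succ) := by
    simp [sg, PresentedGroup.of]; congr 1
  have hc : sg (⟨i, by omega⟩ : Fin (m + 1)) = PresentedGroup.mk (bsRels m) (FreeGroup.of j.castSucc) := by
    simp [sg, PresentedGroup.of]; congr 1
  rw [hs, hc]
  exact mul_inv_eq_one.mp h1

lemma conj_pow_two {G : Type*} [Group G] {t x : G} (h : t * x * t⁻¹ = x ^ 2) (N : ℕ) :
    t ^ N * x * (t ^ N)⁻¹ = x ^ 2 ^ N := by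
  induction N with
  | zero => simp
  | succ k ih =>
    have : t ^ (k + 1) * x * (t ^ (k + 1))⁻¹ = t * (t ^ k * x * (t ^ k)⁻¹) * t⁻¹ := by
      rw [pow_succ']; group
    rw [this, ih]
    have h2 : t * x ^ 2 ^ k * t⁻¹ = (t * x * t⁻¹) ^ 2 ^ k := by
      rw [conj_pow]
    rw [h2, h, ← pow_mul, pow_succ, mul_comm]

def invWord {m : ℕ} (w : List (Fin (m + 1) × Bool)) : List (Fin (m + 1) × Bool) :=
  w.reverse.map fun p => (p.1, !p.2)

lemma evalWord_append {m : ℕ} (u v : List (Fin (m + 1) × Bool)) :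
    evalWord (u ++ v) = evalWord u * evalWord v := by
  simp [evalWord]

lemma evalWord_invWord {m : ℕ} (w : List (Fin (m + 1) × Bool)) :
    evalWord (invWord w) = (evalWord w)⁻¹ := by
  induction w with
  | nil => simp [invWord, evalWord]
  | cons a t ih =>
    have : invWord (a :: t) = invWord t ++ [(a.1, !a.2)] := by simp [invWord]
    rw [this, evalWord_append, ih]
    cases a with
    | mk x b => cases b <;> simp [evalWord]

lemma evalWord_replicate {m : ℕ} (x : Fin (m + 1)) (n : ℕ) :
    evalWord (List.replicate n (x, true)) = sg x ^ n := by
  induction n with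
  | zero => simp [evalWord]
  | succ k ih =>
    rw [List.replicate_succ]
    have : evalWord ((x, true) :: List.replicate k (x, true)) =
        evalWord [(x, true)] * evalWord (List.replicate k (x, true)) := by
      simpa using evalWord_append [(x, true)] (List.replicate k (x, true))
    rw [this, ih]
    have h1 : evalWord [(x, true)] = sg x := by simp [evalWord]
    rw [h1, pow_succ']

/-- The word representing `s_i ^ E k n`, assuming `i + k ≤ m`. -/
def pw (m : ℕ) : ℕ → ℕ → ℕ → List (Fin (m + 1) × Bool)
  | 0, i, n => List.replicate n (⟨i % (m + 1), Nat.mod_lt _ (by omega)⟩, true)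
  | k + 1, i, n =>
      pw m k (i + 1) n ++ (⟨i % (m + 1), Nat.mod_lt _ (by omega)⟩, true) ::
        invWord (pw m k (i + 1) n)

lemma pw_length (m k : ℕ) : ∀ i n : ℕ, (pw m k i n).length ≤ 2 ^ k * (n + k) := by
  induction k with
  | zero => intro i n; simp [pw]
  | succ k ih =>
    intro i n
    have h := ih (i + 1) n
    have : (pw m (k + 1) i n).length = 2 * (pw m k (i + 1) n).length + 1 := by
      simp [pw, invWord]; ring
    rw [this]
    calc 2 * (pw m k (i + 1) n).length + 1 ≤ 2 * (2 ^ k * (n + k)) + 1 := by omega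
      _ ≤ 2 ^ (k + 1) * (n + (k + 1)) := by
          rw [pow_succ]; nlinarith [Nat.one_le_two_pow (n := k)]

lemma pw_eval (m k : ℕ) : ∀ i n : ℕ, i + k ≤ m →
    evalWord (pw m k i n) = sg ⟨i % (m + 1), Nat.mod_lt _ (by omega)⟩ ^ E k n := by
  induction k with
  | zero => intro i n _; simpa [pw, E] using evalWord_replicate (m := m) _ n
  | succ k ih =>
    intro i n h
    have hik : i + 1 + k ≤ m := by omega
    have him : i < m := by omega
    have hmod : i % (m + 1) = i := Nat.mod_eq_of_lt (by omega)
    have hmod1 : (i + 1) % (m + 1) = i + 1 := Nat.mod_eq_of_lt (by omega)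
    have heq := ih (i + 1) n hik
    rw [pw, evalWord_append]
    have hc : evalWord ((⟨i % (m + 1), Nat.mod_lt _ (by omega)⟩, true) ::
        invWord (pw m k (i + 1) n)) =
        sg ⟨i % (m + 1), Nat.mod_lt _ (by omega)⟩ * (evalWord (pw m k (i + 1) n))⁻¹ := by
      have : ((⟨i % (m + 1), Nat.mod_lt _ (by omega)⟩, true) ::
          invWord (pw m k (i + 1) n) : List (Fin (m + 1) × Bool)) =
          [(⟨i % (m + 1), Nat.mod_lt _ (by omega)⟩, true)] ++ invWord (pw m k (i + 1) n) := rfl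
      rw [this, evalWord_append, evalWord_invWord]
      simp [evalWord]
    rw [hc, heq, ← mul_assoc]
    have hrel := sg_rel (m := m) i him
    have hfin1 : (⟨(i + 1) % (m + 1), Nat.mod_lt _ (by omega)⟩ : Fin (m + 1)) =
        ⟨i + 1, by omega⟩ := by ext; simp [hmod1]
    have hfin0 : (⟨i % (m + 1), Nat.mod_lt _ (by omega)⟩ : Fin (m + 1)) =
        (⟨i, by omega⟩ : Fin (m + 1)) := by ext; simp [hmod]
    rw [hfin1, hfin0]
    rw [conj_pow_two hrel (E k n)]
    rfl


/-- For `0 ≤ i ≤ m` and `n ∈ ℕ`, `|s_i^{E(m-i,n)}|_{G_m} ≤ 2^{m-i}·(n + m - i)`. -/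
theorem length_of_iterated_power (m i : ℕ) (hi : i ≤ m) (n : ℕ) :
    wl (sg (⟨i, by omega⟩ : Fin (m + 1)) ^ E (m - i) n) ≤ 2 ^ (m - i) * (n + (m - i)) := by
  have hik : i + (m - i) ≤ m := by omega
  have heval := pw_eval m (m - i) i n hik
  have hfin : (⟨i % (m + 1), Nat.mod_lt _ (by omega)⟩ : Fin (m + 1)) =
      (⟨i, by omega⟩ : Fin (m + 1)) := by ext; simp [Nat.mod_eq_of_lt (show i < m + 1 by omega)]
  rw [hfin] at heval
  have hmem : (pw m (m - i) i n).length ∈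
      { L | ∃ w : List (Fin (m + 1) × Bool), w.length = L ∧
        evalWord w = sg (⟨i, by omega⟩ : Fin (m + 1)) ^ E (m - i) n } :=
    ⟨pw m (m - i) i n, rfl, heval⟩
  exact le_trans (Nat.sInf_le hmem) (pw_length m (m - i) i n)
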